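/- arXiv:2605.12812 — 3 statements merged into one kernel-verified Lean document; each statement's English description precedes it below -/
import Mathlib

section
/- Let n ≥ 1, let S > 0, and let d : Fin n → ℝ satisfy 0 < d i ≤ S for all i. Let W = { w ∈ {0,1}^n : ∑_i d i · w i ≤ S } be the (finite, nonempty) set of feasible configurations, let e = (1,…,1) ∈ ℝ^n, and let r_max = max { r ∈ [0,1] : r·e ∈ convexHull(W) }; this maximum is attained and is positive. Let a(n) be the maximum of |det M| over n×n matrices with entries in {0,1}. Then there exist an integer k with 1 ≤ k ≤ a(n) and nonnegative integers (m_w)_{w∈W} such that ∑_{w∈W} m_w · w = k·e and k / (∑_{w∈W} m_w) = r_max. -/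
/-! The set of `r ∈ [0, 1]` with `r • 1 ∈ conv W` is compact, so `r_max` is attained, and it
contains `1 / n` because the unit vectors are feasible. Write `r_max • 1` as a convex combination
of configurations and thin it out, conic-Carathéodory style, to a linearly independent support
without increasing its total weight; maximality of `r_max` forces that weight to stay `1`, so
`1 = ∑ g w • w` with `∑ g w = 1 / r_max`. Completing the support by unit vectors to a basis of
`0/1` vectors, Cramer's rule makes `|det| • g` integral, and `k = |det| ≤ a(n)`, `m = k • g` is
the required `k`-fold packing. -/

/-- `a(p)`: the maximal value of `|det M|` over `p × p` matrices `M` with entries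
in `{0,1}`. -/
noncomputable def maxBinDet (p : ℕ) : ℝ :=
  sSup {v : ℝ | ∃ M : Matrix (Fin p) (Fin p) ℝ,
    (∀ i j, M i j = 0 ∨ M i j = 1) ∧ v = |M.det|}

open Finset Matrix

section ConicCaratheodory

variable {𝕜 E : Type*} [Field 𝕜] [LinearOrder 𝕜] [IsStrictOrderedRing 𝕜]
  [AddCommGroup E] [Module 𝕜 E]

lemma exists_sum_smul_eq_zero_of_not_linearIndepOn {t : Finset E}
    (ht : ¬LinearIndepOn 𝕜 id (t : Set E)) :
    ∃ c : E → 𝕜, ∑ w ∈ t, c w • w = 0 ∧ 0 ≤ ∑ w ∈ t, c w ∧ ∃ w ∈ t, 0 < c w := by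
  obtain ⟨c, hc, w₁, hw₁, hcw₁⟩ := not_linearIndepOn_finset_iff.1 ht
  obtain ⟨c, hc, hsum, hcw₁⟩ :
      ∃ c : E → 𝕜, ∑ w ∈ t, c w • w = 0 ∧ 0 ≤ ∑ w ∈ t, c w ∧ c w₁ ≠ 0 := by
    rcases le_total 0 (∑ w ∈ t, c w) with hsum | hsum
    · exact ⟨c, hc, hsum, hcw₁⟩
    · exact ⟨-c, by simpa [neg_smul] using hc, by simpa using hsum, neg_ne_zero.2 hcw₁⟩
  refine ⟨c, hc, hsum, ?_⟩
  by_contra! hneg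
  exact hcw₁ ((sum_eq_zero_iff_of_nonpos hneg).1 (le_antisymm (sum_nonpos hneg) hsum) w₁ hw₁)

/-- Subtracting the largest admissible multiple of a relation with nonnegative coefficient sum
kills one coefficient without increasing the total weight. -/
lemma exists_erase_sum_smul_eq_of_not_linearIndepOn [DecidableEq E] {t : Finset E}
    (ht : ¬LinearIndepOn 𝕜 id (t : Set E)) {f : E → 𝕜} (hf : ∀ w ∈ t, 0 ≤ f w) :
    ∃ w₀ ∈ t, ∃ f' : E → 𝕜, (∀ w ∈ t.erase w₀, 0 ≤ f' w) ∧
      ∑ w ∈ t.erase w₀, f' w • w = ∑ w ∈ t, f w • w ∧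
      ∑ w ∈ t.erase w₀, f' w ≤ ∑ w ∈ t, f w := by
  obtain ⟨c, hc, hcsum, hcpos⟩ := exists_sum_smul_eq_zero_of_not_linearIndepOn ht
  obtain ⟨w₀, hw₀, hmin⟩ := (t.filter fun w => 0 < c w).exists_min_image (fun w => f w / c w)
    (by simpa [Finset.Nonempty] using hcpos)
  rw [mem_filter] at hw₀
  set ε := f w₀ / c w₀
  have hε : 0 ≤ ε := div_nonneg (hf w₀ hw₀.1) hw₀.2.le
  set f' := fun w => f w - ε * c w
  have hf'w₀ : f' w₀ = 0 := by simp [f', ε, hw₀.2.ne']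
  refine ⟨w₀, hw₀.1, f', fun w hw => ?_, ?_, ?_⟩
  · have hwt := mem_of_mem_erase hw
    rcases lt_or_ge 0 (c w) with hcw | hcw
    · have := hmin w (mem_filter.2 ⟨hwt, hcw⟩)
      rw [le_div_iff₀ hcw] at this
      simp only [f']
      linarith
    · exact sub_nonneg.2 ((mul_nonpos_of_nonneg_of_nonpos hε hcw).trans (hf w hwt))
  · rw [sum_erase _ (by rw [hf'w₀, zero_smul])]
    simp only [f', sub_smul, mul_smul, sum_sub_distrib, ← smul_sum, hc, smul_zero, sub_zero]
  · rw [sum_erase _ hf'w₀]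
    simp only [f', sum_sub_distrib, ← mul_sum]
    exact sub_le_self _ (mul_nonneg hε hcsum)

theorem exists_linearIndepOn_subset_sum_smul_eq (t : Finset E) {f : E → 𝕜}
    (hf : ∀ w ∈ t, 0 ≤ f w) :
    ∃ u ⊆ t, ∃ g : E → 𝕜, LinearIndepOn 𝕜 id (u : Set E) ∧ (∀ w ∈ u, 0 ≤ g w) ∧
      ∑ w ∈ u, g w • w = ∑ w ∈ t, f w • w ∧ ∑ w ∈ u, g w ≤ ∑ w ∈ t, f w := by
  classical
  induction t using Finset.strongInduction generalizing f with
  | H t ih =>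
    by_cases ht : LinearIndepOn 𝕜 id (t : Set E)
    · exact ⟨t, subset_rfl, f, ht, hf, rfl, le_rfl⟩
    obtain ⟨w₀, hw₀, f', hf', hsum, hweight⟩ := exists_erase_sum_smul_eq_of_not_linearIndepOn ht hf
    obtain ⟨u, hu, g, hind, hg, hgsum, hgweight⟩ := ih _ (erase_ssubset hw₀) hf'
    exact ⟨u, hu.trans (erase_subset _ _), g, hind, hg, hgsum.trans hsum,
      hgweight.trans hweight⟩

end ConicCaratheodory

lemma finite_setOf_forall_eq_zero_or_eq_one (ι : Type*) [Finite ι] :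
    {w : ι → ℝ | ∀ i, w i = 0 ∨ w i = 1}.Finite :=
  (Set.Finite.pi fun _ => Set.toFinite {0, 1}).subset fun _ hw i _ => hw i

lemma abs_det_le_maxBinDet {p : ℕ} {M : Matrix (Fin p) (Fin p) ℝ}
    (hM : ∀ i j, M i j = 0 ∨ M i j = 1) : |M.det| ≤ maxBinDet p := by
  have hfin : {M : Matrix (Fin p) (Fin p) ℝ | ∀ i j, M i j = 0 ∨ M i j = 1}.Finite :=
    (Set.Finite.pi fun _ => finite_setOf_forall_eq_zero_or_eq_one (Fin p)).subset
      fun M hM i _ => hM i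
  refine le_csSup ((hfin.image fun M => |M.det|).bddAbove.mono ?_) ⟨M, hM, rfl⟩
  rintro _ ⟨M, hM, rfl⟩
  exact ⟨M, hM, rfl⟩

lemma exists_intCast_eq_det {ι : Type*} [Fintype ι] [DecidableEq ι] {M : Matrix ι ι ℝ}
    (hM : ∀ i j, ∃ z : ℤ, M i j = z) : ∃ z : ℤ, M.det = z := by
  choose N hN using hM
  refine ⟨(Matrix.of N).det, ?_⟩
  rw [show M = (Int.castRingHom ℝ).mapMatrix (Matrix.of N) by ext i j; simp [hN],
    ← RingHom.map_det, Int.coe_castRingHom]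

lemma exists_intCast_eq_abs_det_mul_of_vecMul_eq {ι : Type*} [Fintype ι] [DecidableEq ι]
    {A : Matrix ι ι ℝ} (hA : ∀ i j, ∃ z : ℤ, A i j = z) {x h : ι → ℝ}
    (hx : ∀ i, ∃ z : ℤ, x i = z) (hhx : h ᵥ* A = x) (j : ι) :
    ∃ z : ℤ, (z : ℝ) = |A.det| * h j := by
  have hcramer : A.det • h = cramer Aᵀ x := by
    rw [cramer_eq_adjugate_mulVec, ← hhx, ← mulVec_transpose, mulVec_mulVec, adjugate_mul,
      det_transpose, smul_mulVec, one_mulVec]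
  have hj := congrFun hcramer j
  rw [Pi.smul_apply, smul_eq_mul, cramer_transpose_apply] at hj
  obtain ⟨N, hN⟩ := exists_intCast_eq_det (M := A.updateRow j x) fun i k => by
    rw [updateRow_apply]
    split_ifs
    exacts [hx k, hA i k]
  rcases abs_choice A.det with habs | habs
  · exact ⟨N, by rw [habs, hj, hN]⟩
  · exact ⟨-N, by rw [habs, neg_mul, hj, hN, Int.cast_neg]⟩

lemma exists_linearIndependent_binary_superset {n : ℕ} {u : Set (Fin n → ℝ)}
    (hu : LinearIndepOn ℝ id u) (hu01 : ∀ w ∈ u, ∀ i, w i = 0 ∨ w i = 1) :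
    ∃ v : Fin n → Fin n → ℝ, LinearIndependent ℝ v ∧ (∀ j i, v j i = 0 ∨ v j i = 1) ∧
      u ⊆ Set.range v := by
  classical
  obtain ⟨b, hbt, hub, htb, hb⟩ := exists_linearIndepOn_id_extension hu
    (Set.subset_union_left (t := Set.range fun i : Fin n => Pi.single i (1 : ℝ)))
  have hspan : ⊤ ≤ Submodule.span ℝ (Set.range ((↑) : b → Fin n → ℝ)) := by
    rw [Subtype.range_coe, ← (Pi.basisFun ℝ (Fin n)).span_eq, Submodule.span_le]
    rintro _ ⟨i, rfl⟩
    exact htb (Or.inr ⟨i, by simp⟩)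
  let φ := (Pi.basisFun ℝ (Fin n)).indexEquiv (Module.Basis.mk hb.linearIndependent hspan)
  refine ⟨fun j => φ j, hb.linearIndependent.comp φ φ.injective, fun j i => ?_,
    fun w hw => ⟨φ.symm ⟨w, hub hw⟩, by simp⟩⟩
  rcases hbt (φ j).2 with hw | ⟨k, hk⟩
  · exact hu01 _ hw i
  · simp only [← hk, Pi.single_apply]
    split_ifs <;> simp

lemma sum_ite_mem_smul_eq {ι M : Type*} [Fintype ι] [AddCommMonoid M] [Module ℝ M]
    [DecidableEq M] {v : ι → M} (hv : Function.Injective v) {u : Finset M}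
    (huv : ↑u ⊆ Set.range v) (g : M → ℝ) :
    ∑ j, (if v j ∈ u then g (v j) else 0) • v j = ∑ w ∈ u, g w • w := by
  simp only [ite_smul, zero_smul, ← sum_filter]
  rw [← sum_preimage v u hv.injOn (fun w => g w • w) fun w hw hwv => (hwv (huv hw)).elim]
  exact sum_congr (by ext; simp) fun _ _ => rfl

theorem exists_nat_mul_eq_of_sum_smul_eq_one {n : ℕ} {u : Finset (Fin n → ℝ)}
    (hu : LinearIndepOn ℝ id (u : Set (Fin n → ℝ))) (hu01 : ∀ w ∈ u, ∀ i, w i = 0 ∨ w i = 1)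
    {g : (Fin n → ℝ) → ℝ} (hg0 : ∀ w ∈ u, 0 ≤ g w) (hg : ∑ w ∈ u, g w • w = 1) :
    ∃ k : ℕ, 1 ≤ k ∧ (k : ℝ) ≤ maxBinDet n ∧ ∃ m : (Fin n → ℝ) → ℕ,
      (∀ w, m w ≠ 0 → w ∈ u) ∧ ∀ w ∈ u, (m w : ℝ) = k * g w := by
  classical
  obtain ⟨v, hv, hv01, huv⟩ := exists_linearIndependent_binary_superset hu hu01
  have hA : ∀ i j, ∃ z : ℤ, Matrix.of v i j = z := fun i j => by
    rcases hv01 i j with h | h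
    exacts [⟨0, by simp [h]⟩, ⟨1, by simp [h]⟩]
  obtain ⟨D, hD⟩ := exists_intCast_eq_det hA
  have hdet : (Matrix.of v).det ≠ 0 :=
    ((isUnit_iff_isUnit_det _).1 (linearIndependent_rows_iff_isUnit.1 hv)).ne_zero
  have hk : ((D.natAbs : ℕ) : ℝ) = |(Matrix.of v).det| := by rw [Nat.cast_natAbs, hD, Int.cast_abs]
  have hvec : (fun j => if v j ∈ u then g (v j) else 0) ᵥ* Matrix.of v = 1 := by
    rw [vecMul_eq_sum, ← hg, ← sum_ite_mem_smul_eq hv.injective huv]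
    rfl
  have hint : ∀ w ∈ u, ∃ z : ℤ, (z : ℝ) = D.natAbs * g w := by
    rintro _ hw
    obtain ⟨j, rfl⟩ := huv hw
    simpa [hk, hw] using exists_intCast_eq_abs_det_mul_of_vecMul_eq hA
      (fun _ => ⟨1, Int.cast_one.symm⟩) hvec j
  refine ⟨D.natAbs, Int.natAbs_pos.2 fun h => hdet (by rw [hD, h, Int.cast_zero]), ?_,
    fun w => if w ∈ u then ⌊(D.natAbs : ℝ) * g w⌋₊ else 0, fun w hw => ?_, fun w hw => ?_⟩
  · exact hk ▸ abs_det_le_maxBinDet fun i j => hv01 i j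
  · by_contra hwu
    simp [hwu] at hw
  · obtain ⟨z, hz⟩ := hint w hw
    have hz0 : 0 ≤ z := by exact_mod_cast hz ▸ mul_nonneg (Nat.cast_nonneg _) (hg0 w hw)
    lift z to ℕ using hz0
    simp only [hw, if_true, ← hz, Int.cast_natCast, Nat.floor_natCast]

lemma inv_natCast_smul_one_mem_convexHull {n : ℕ} (hn : 0 < n) {W : Set (Fin n → ℝ)}
    (hW : ∀ i, Pi.single i 1 ∈ W) : (n : ℝ)⁻¹ • (1 : Fin n → ℝ) ∈ convexHull ℝ W := by
  have := (convex_convexHull ℝ W).sum_mem (t := univ) (w := fun _ => (n : ℝ)⁻¹)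
    (z := fun i => Pi.single i 1) (fun _ _ => by positivity) (by simp [hn.ne'])
    fun i _ => subset_convexHull ℝ W (hW i)
  rwa [← smul_sum, univ_sum_single (fun _ => (1 : ℝ))] at this

lemma isCompact_setOf_smul_mem_convexHull {E : Type*} [AddCommGroup E] [Module ℝ E]
    [TopologicalSpace E] [IsTopologicalAddGroup E] [ContinuousSMul ℝ E] [T2Space E] {W : Set E}
    (hW : W.Finite) (e : E) :
    IsCompact {r : ℝ | 0 ≤ r ∧ r ≤ 1 ∧ r • e ∈ convexHull ℝ W} := by
  have hset : {r : ℝ | 0 ≤ r ∧ r ≤ 1 ∧ r • e ∈ convexHull ℝ W} =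
      Set.Icc 0 1 ∩ (· • e) ⁻¹' convexHull ℝ W := by
    ext
    simp [and_assoc]
  rw [hset]
  exact isCompact_Icc.inter_right
    ((hW.isCompact_convexHull ℝ).isClosed.preimage (continuous_id.smul continuous_const))

lemma le_sum_of_sum_smul_eq_smul_one {ι : Type*} {u : Finset (ι → ℝ)} {g : (ι → ℝ) → ℝ}
    {r : ℝ} (i : ι) (hg0 : ∀ w ∈ u, 0 ≤ g w) (hu1 : ∀ w ∈ u, w i ≤ 1)
    (h : ∑ w ∈ u, g w • w = r • 1) : r ≤ ∑ w ∈ u, g w := by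
  have hi := congrFun h i
  simp only [Finset.sum_apply, Pi.smul_apply, smul_eq_mul, Pi.one_apply, mul_one] at hi
  rw [← hi]
  exact sum_le_sum fun w hw => mul_le_of_le_one_right (hg0 w hw) (hu1 w hw)

/-- At the optimum `r` the reduced combination has weight exactly `1`: a lighter one,
renormalised, would put `(r / weight) • 1` in the hull. -/
theorem exists_linearIndepOn_sum_smul_eq_one_of_isGreatest {n : ℕ} {W : Set (Fin n → ℝ)}
    (hW : W.Finite) (i₀ : Fin n) (hW1 : ∀ w ∈ W, w i₀ ≤ 1) {r : ℝ}
    (hr : IsGreatest {r : ℝ | 0 ≤ r ∧ r ≤ 1 ∧ r • (1 : Fin n → ℝ) ∈ convexHull ℝ W} r)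
    (hr0 : 0 < r) :
    ∃ u : Finset (Fin n → ℝ), ↑u ⊆ W ∧ LinearIndepOn ℝ id (u : Set (Fin n → ℝ)) ∧
      ∃ g : (Fin n → ℝ) → ℝ, (∀ w ∈ u, 0 ≤ g w) ∧ ∑ w ∈ u, g w • w = 1 ∧
        ∑ w ∈ u, g w = r⁻¹ := by
  have hrW := hr.1.2.2
  rw [← hW.coe_toFinset] at hrW
  obtain ⟨f, hf0, hf1, hf⟩ := Finset.mem_convexHull'.1 hrW
  obtain ⟨u, hut, g, hu, hg0, hg, hgs⟩ := exists_linearIndepOn_subset_sum_smul_eq _ hf0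
  rw [hf] at hg
  rw [hf1] at hgs
  have huW : ↑u ⊆ W := fun w hw => hW.mem_toFinset.1 (hut hw)
  set s := ∑ w ∈ u, g w
  have hrs : r ≤ s := le_sum_of_sum_smul_eq_smul_one i₀ hg0 (fun w hw => hW1 w (huW hw)) hg
  have hs : 0 < s := hr0.trans_le hrs
  have hmem : r / s ∈ {r : ℝ | 0 ≤ r ∧ r ≤ 1 ∧ r • (1 : Fin n → ℝ) ∈ convexHull ℝ W} := by
    refine ⟨by positivity, (div_le_one hs).2 hrs, convexHull_mono huW
      (Finset.mem_convexHull'.2 ⟨fun w => g w / s, fun w hw => div_nonneg (hg0 w hw) hs.le,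
        by rw [← sum_div, div_self hs.ne'], ?_⟩)⟩
    simp_rw [div_eq_inv_mul, mul_smul, ← smul_sum, hg]
  have hs1 : s = 1 := le_antisymm hgs <| by
    have := hr.2 hmem
    rwa [div_le_iff₀ hs, le_mul_iff_one_le_right hr0] at this
  refine ⟨u, huW, hu, fun w => g w / r, fun w hw => div_nonneg (hg0 w hw) hr0.le, ?_, ?_⟩
  · simp_rw [div_eq_inv_mul, mul_smul, ← smul_sum, hg, smul_smul, inv_mul_cancel₀ hr0.ne',
      one_smul]
  · rw [← sum_div, show ∑ w ∈ u, g w = 1 from hs1, one_div]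

theorem stmt_2_general (n : ℕ) (hn : 1 ≤ n) (S : ℝ) (d : Fin n → ℝ)
    (hd : ∀ i, 0 < d i ∧ d i ≤ S)
    (W : Set (Fin n → ℝ))
    (hW : W = {w | (∀ i, w i = 0 ∨ w i = 1) ∧ ∑ i, d i * w i ≤ S})
    (e : Fin n → ℝ) (he : e = fun _ => 1)
    (rmax : ℝ)
    (hrmax : rmax = sSup {r : ℝ | 0 ≤ r ∧ r ≤ 1 ∧ r • e ∈ convexHull ℝ W}) :
    (0 < rmax ∧ rmax • e ∈ convexHull ℝ W) ∧
    ∃ k : ℕ, 1 ≤ k ∧ (k : ℝ) ≤ maxBinDet n ∧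
      ∃ m : (Fin n → ℝ) → ℕ,
        (Function.support m).Finite ∧ (∀ w, m w ≠ 0 → w ∈ W) ∧
        (∑ᶠ w, m w • w) = k • e ∧
        (k : ℝ) / (∑ᶠ w, (m w : ℝ)) = rmax := by
  obtain rfl : e = 1 := he.trans Pi.one_def.symm
  have hW01 : ∀ w ∈ W, ∀ i, w i = 0 ∨ w i = 1 := fun w hw => (hW ▸ hw).1
  have hWfin : W.Finite := (finite_setOf_forall_eq_zero_or_eq_one (Fin n)).subset hW01
  have hunit : ∀ i, Pi.single i 1 ∈ W := fun i => hW ▸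
    ⟨fun j => by rw [Pi.single_apply]; split_ifs <;> simp, by simpa [Pi.single_apply] using (hd i).2⟩
  have hmem : (n : ℝ)⁻¹ ∈ {r : ℝ | 0 ≤ r ∧ r ≤ 1 ∧ r • (1 : Fin n → ℝ) ∈ convexHull ℝ W} :=
    ⟨by positivity, inv_le_one_of_one_le₀ (by exact_mod_cast hn),
      inv_natCast_smul_one_mem_convexHull hn hunit⟩
  have hgreat := hrmax ▸ (isCompact_setOf_smul_mem_convexHull hWfin 1).isGreatest_sSup ⟨_, hmem⟩
  have hpos : 0 < rmax := (by positivity : 0 < (n : ℝ)⁻¹).trans_le (hgreat.2 hmem)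
  obtain ⟨u, huW, hu, g, hg0, hg, hgs⟩ := exists_linearIndepOn_sum_smul_eq_one_of_isGreatest
    hWfin ⟨0, hn⟩ (fun w hw => (hW01 w hw _).elim (·.le.trans zero_le_one) (·.le)) hgreat hpos
  obtain ⟨k, hk1, hkle, m, hmu, hm⟩ :=
    exists_nat_mul_eq_of_sum_smul_eq_one hu (fun w hw => hW01 w (huW hw)) hg0 hg
  have hsupp : Function.support m ⊆ u := fun w hw => hmu w hw
  refine ⟨⟨hpos, hgreat.1.2.2⟩, k, hk1, hkle, m, u.finite_toSet.subset hsupp,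
    fun w hw => huW (hmu w hw), ?_, ?_⟩
  · rw [finsum_eq_sum_of_support_subset _ fun w hw => hmu w fun h => hw (by rw [h, zero_smul])]
    calc ∑ w ∈ u, m w • w = ∑ w ∈ u, (k : ℝ) • g w • w :=
          sum_congr rfl fun w hw => by rw [← Nat.cast_smul_eq_nsmul ℝ, hm w hw, mul_smul]
      _ = k • 1 := by rw [← smul_sum, hg, Nat.cast_smul_eq_nsmul]
  · rw [finsum_eq_sum_of_support_subset _ (by simpa using hsupp), sum_congr rfl hm, ← mul_sum,
      hgs]
    field_simp

/-- For demands `d : Fin n → ℝ` with `0 < d i ≤ S`, letting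
`W = {w ∈ {0,1}^n : ∑ d i * w i ≤ S}` be the feasible configurations,
`e = (1,…,1)` and `r_max = sup {r ∈ [0,1] : r • e ∈ convexHull W}`, the maximum is
attained and positive, and there are `k` with `1 ≤ k ≤ a(n)` and nonnegative
integers `(m_w)` supported on `W` with `∑ m_w • w = k • e` and `k / (∑ m_w) = r_max`. -/
theorem stmt_2 (n : ℕ) (hn : 1 ≤ n) (S : ℝ) (hS : 0 < S) (d : Fin n → ℝ)
    (hd : ∀ i, 0 < d i ∧ d i ≤ S)
    (W : Set (Fin n → ℝ))
    (hW : W = {w | (∀ i, w i = 0 ∨ w i = 1) ∧ ∑ i, d i * w i ≤ S})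
    (e : Fin n → ℝ) (he : e = fun _ => 1)
    (rmax : ℝ)
    (hrmax : rmax = sSup {r : ℝ | 0 ≤ r ∧ r ≤ 1 ∧ r • e ∈ convexHull ℝ W}) :
    (0 < rmax ∧ rmax • e ∈ convexHull ℝ W) ∧
    ∃ k : ℕ, 1 ≤ k ∧ (k : ℝ) ≤ maxBinDet n ∧
      ∃ m : (Fin n → ℝ) → ℕ,
        (Function.support m).Finite ∧ (∀ w, m w ≠ 0 → w ∈ W) ∧
        (∑ᶠ w, m w • w) = k • e ∧
        (k : ℝ) / (∑ᶠ w, (m w : ℝ)) = rmax :=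
  stmt_2_general n hn S d hd W hW e he rmax hrmax
end

section
/- Let 0 < ε ≤ 1/2, S > 0, and k ≥ 1. Let J be an instance in which every item has size in (ε·S, S], sorted in nondecreasing order of size, and suppose g := n(J)·ε² is a positive integer, where n(J) is the number of items of J. Partition J into consecutive groups of cardinality g (the last group possibly smaller) and let U be the instance obtained from J by rounding each item size up to the maximum size in its group. Then OPT(U_k) ≤ (1+ε)·OPT(J_k). -/
/-!
Rounding an item up to the largest size in its group never makes it larger than the item `g`
positions later. So an optimal `k`-times packing of `J`, with every item replaced by the one `g`
positions before it, packs all of `U` except its last `g` items, and these get `k` singleton bins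
each. Counting sizes, `OPT(J_k) · S ≥ k · n · ε · S`, so the `k · g = k · n · ε²` extra bins are
at most `ε · OPT(J_k)`.
-/

/-- `OPT(D_k)`: the minimum number `q` of bins of a `k`-times packing of the
instance `d : Fin n → ℝ` with capacity `S`: each bin has total size at most `S`
and each item lies in exactly `k` bins. -/
noncomputable def kOPTF {n : ℕ} (d : Fin n → ℝ) (S : ℝ) (k : ℕ) : ℕ :=
  sInf {q | ∃ B : Fin q → Finset (Fin n),
    (∀ j, ∑ i ∈ B j, d i ≤ S) ∧
    (∀ i, (Finset.univ.filter fun j => i ∈ B j).card = k)}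

open Finset

def IsKPacking {α ι : Type*} (d : α → ℝ) (S : ℝ) (k : ℕ) (B : ι → Finset α) : Prop :=
  (∀ j, ∑ a ∈ B j, d a ≤ S) ∧ ∀ a, Nat.card {j // a ∈ B j} = k

namespace IsKPacking

variable {α β ι κ : Type*} {d : α → ℝ} {S : ℝ} {k : ℕ}

theorem singletons (hdS : ∀ a, d a ≤ S) : IsKPacking d S k fun p : Fin k × α => {p.2} := by
  refine ⟨fun p => by simpa using hdS p.2, fun a => ?_⟩
  refine Nat.card_eq_of_equiv_fin
    { toFun := fun p => p.1.1
      invFun := fun c => ⟨(c, a), mem_singleton_self a⟩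
      left_inv := ?_
      right_inv := fun c => rfl }
  rintro ⟨⟨c, b⟩, hb⟩
  obtain rfl := mem_singleton.1 hb
  rfl

theorem comp_equiv {ι' : Type*} {B : ι → Finset α}
    (hB : IsKPacking d S k B) (e : ι' ≃ ι) : IsKPacking d S k (B ∘ e) :=
  ⟨fun j => hB.1 (e j),
    fun a => (Nat.card_congr (e.subtypeEquiv fun _ => Iff.rfl)).trans (hB.2 a)⟩

theorem preimage {u : β → ℝ} {B : ι → Finset α} (hB : IsKPacking d S k B) {σ : β → α}
    (hσ : σ.Injective) (hd0 : ∀ a, 0 ≤ d a) (hud : ∀ b, u b ≤ d (σ b)) :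
    IsKPacking u S k fun j => (B j).preimage σ hσ.injOn := by
  classical
  refine ⟨fun j => ?_, fun b => by simpa only [mem_preimage] using hB.2 (σ b)⟩
  calc ∑ b ∈ (B j).preimage σ hσ.injOn, u b
      ≤ ∑ b ∈ (B j).preimage σ hσ.injOn, d (σ b) := sum_le_sum fun b _ => hud b
    _ = ∑ a ∈ B j with a ∈ Set.range σ, d a := sum_preimage' _ _ _ _
    _ ≤ ∑ a ∈ B j, d a :=
        sum_le_sum_of_subset_of_nonneg (filter_subset _ _) fun a _ _ => hd0 a
    _ ≤ S := hB.1 j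

theorem sumElim [Finite ι] [Finite κ] {p : α → Prop}
    {B : ι → Finset {a // p a}} {C : κ → Finset {a // ¬ p a}}
    (hB : IsKPacking (fun a : {a // p a} => d a) S k B)
    (hC : IsKPacking (fun a : {a // ¬ p a} => d a) S k C) :
    IsKPacking d S k
      (Sum.elim (fun j => (B j).map (.subtype _)) (fun j => (C j).map (.subtype _))) := by
  refine ⟨Sum.rec (fun j => by simpa using hB.1 j) (fun j => by simpa using hC.1 j),
    fun a => ?_⟩
  rw [Nat.card_congr (Equiv.subtypeSum), Nat.card_sum]
  by_cases ha : p a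
  · simpa [ha] using hB.2 ⟨a, ha⟩
  · simpa [ha] using hC.2 ⟨a, ha⟩

theorem mul_sum_le_card_mul [Fintype α] [Fintype ι] {B : ι → Finset α}
    (hB : IsKPacking d S k B) :
    k * ∑ a, d a ≤ Fintype.card ι * S := by
  classical
  calc k * ∑ a, d a = ∑ a, ∑ j with a ∈ B j, d a := by
        simp only [mul_sum, sum_const, nsmul_eq_mul, ← Fintype.card_subtype,
          ← Nat.card_eq_fintype_card, hB.2]
    _ = ∑ j, ∑ a ∈ B j, d a := (sum_comm' (by simp)).symm
    _ ≤ ∑ _j : ι, S := sum_le_sum fun j _ => hB.1 j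
    _ = Fintype.card ι * S := by simp

end IsKPacking

section

variable {ι : Type*} {n : ℕ} {d : Fin n → ℝ} {S : ℝ} {k : ℕ}

theorem kOPTF_eq_sInf :
    kOPTF d S k = sInf {q | ∃ B : Fin q → Finset (Fin n), IsKPacking d S k B} := by
  simp only [kOPTF, IsKPacking, Nat.card_eq_fintype_card, Fintype.card_subtype]

theorem kOPTF_le_natCard [Finite ι] {B : ι → Finset (Fin n)} (hB : IsKPacking d S k B) :
    kOPTF d S k ≤ Nat.card ι := by
  rw [kOPTF_eq_sInf]
  exact Nat.sInf_le ⟨fun j => B ((Finite.equivFin ι).symm j), hB.comp_equiv _⟩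

theorem exists_isKPacking_kOPTF (hdS : ∀ i, d i ≤ S) :
    ∃ B : Fin (kOPTF d S k) → Finset (Fin n), IsKPacking d S k B := by
  have hne : {q | ∃ B : Fin q → Finset (Fin n), IsKPacking d S k B}.Nonempty :=
    ⟨_, _, (IsKPacking.singletons hdS).comp_equiv (Finite.equivFin (Fin k × Fin n)).symm⟩
  rw [kOPTF_eq_sInf]
  exact Nat.sInf_mem hne

theorem mul_sum_le_kOPTF_mul (hdS : ∀ i, d i ≤ S) : k * ∑ i, d i ≤ kOPTF d S k * S := by
  obtain ⟨B, hB⟩ := exists_isKPacking_kOPTF (k := k) hdS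
  simpa using hB.mul_sum_le_card_mul

theorem kOPTF_le_add_of_le_shift {u : Fin n → ℝ} {g : ℕ} (hd0 : ∀ i, 0 ≤ d i)
    (hdS : ∀ i, d i ≤ S) (huS : ∀ i, u i ≤ S)
    (hud : ∀ (i : Fin n) (h : i + g < n), u i ≤ d ⟨i + g, h⟩) :
    kOPTF u S k ≤ kOPTF d S k + k * g := by
  obtain ⟨B, hB⟩ := exists_isKPacking_kOPTF (k := k) hdS
  let shift : {i : Fin n // i + g < n} → Fin n := fun i => ⟨i.1 + g, i.2⟩
  have hshift_inj : shift.Injective := fun i j h => by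
    ext; simpa [shift] using h
  have hhead := hB.preimage hshift_inj hd0 fun i => hud i.1 i.2
  have htail := IsKPacking.singletons (k := k) fun i : {i : Fin n // ¬ i + g < n} => huS i
  have htail_card : Nat.card {i : Fin n // ¬ i + g < n} ≤ g := by
    simpa using Nat.card_le_card_of_injective
      (fun i : {i : Fin n // ¬ i + g < n} => (⟨i.1 + g - n, by omega⟩ : Fin g))
      fun i j h => by ext; simp only [Fin.mk.injEq] at h; omega
  calc kOPTF u S k ≤ Nat.card (Fin (kOPTF d S k) ⊕ Fin k × {i : Fin n // ¬ i + g < n}) :=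
        kOPTF_le_natCard (hhead.sumElim htail)
    _ = kOPTF d S k + k * Nat.card {i : Fin n // ¬ i + g < n} := by simp
    _ ≤ kOPTF d S k + k * g := by gcongr

end

theorem stmt_13_general (ε S : ℝ) (hε : 0 < ε ∧ ε ≤ 1/2) (hS : 0 < S)
    (k : ℕ) (nJ : ℕ) (d : Fin nJ → ℝ)
    (hd : ∀ i, ε * S < d i ∧ d i ≤ S) (hmono : Monotone d)
    (g : ℕ) (hgval : (g : ℝ) = (nJ : ℝ) * ε ^ 2)
    (U : Fin nJ → ℝ)
    (hU : U = fun i => d ⟨min (nJ - 1) (i.val / g * g + g - 1),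
      (Nat.min_le_left _ _).trans_lt (Nat.sub_lt i.pos Nat.one_pos)⟩) :
    (kOPTF U S k : ℝ) ≤ (1 + ε) * (kOPTF d S k : ℝ) := by
  obtain ⟨hε0, -⟩ := hε
  have hdS i := (hd i).2
  have hd0 i : 0 ≤ d i := (mul_pos hε0 hS).le.trans (hd i).1.le
  have hUd (i : Fin nJ) (h : i + g < nJ) : U i ≤ d ⟨i + g, h⟩ := by
    subst hU
    refine hmono (Fin.mk_le_mk.2 ?_)
    have := Nat.div_mul_le_self i g
    omega
  have hshift : (kOPTF U S k : ℝ) ≤ kOPTF d S k + k * g := by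
    exact_mod_cast kOPTF_le_add_of_le_shift hd0 hdS (by simp [hU, hdS]) hUd
  have hsize : k * (nJ * (ε * S)) ≤ kOPTF d S k * S :=
    calc k * (nJ * (ε * S)) ≤ k * ∑ i, d i := by
          gcongr; simpa using sum_le_sum (s := univ) fun i _ => (hd i).1.le
      _ ≤ kOPTF d S k * S := mul_sum_le_kOPTF_mul hdS
  have hlower : k * nJ * ε ≤ (kOPTF d S k : ℝ) :=
    le_of_mul_le_mul_right (by linarith) hS
  calc (kOPTF U S k : ℝ) ≤ kOPTF d S k + k * g := hshift
    _ = kOPTF d S k + ε * (k * nJ * ε) := by rw [hgval]; ring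
    _ ≤ (1 + ε) * kOPTF d S k := by nlinarith

/-- Let `0 < ε ≤ 1/2`, `S > 0`, `k ≥ 1`, and `J = d : Fin nJ → ℝ` an
instance with all sizes in `(ε·S, S]`, sorted in nondecreasing order.  Assume
`g = nJ·ε²` is a positive integer.  Partition `J` into consecutive groups of
cardinality `g` (the last group possibly smaller) and let `U` round each item up to
the maximum size in its group (for the group of index `i` this maximum sits at
index `min (nJ-1) (i/g·g + g - 1)`).  Then `OPT(U_k) ≤ (1+ε)·OPT(J_k)`. -/
theorem stmt_13 (ε S : ℝ) (hε : 0 < ε ∧ ε ≤ 1/2) (hS : 0 < S)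
    (k : ℕ) (hk : 1 ≤ k) (nJ : ℕ) (d : Fin nJ → ℝ)
    (hd : ∀ i, ε * S < d i ∧ d i ≤ S) (hmono : Monotone d)
    (g : ℕ) (hg : 0 < g) (hgval : (g : ℝ) = (nJ : ℝ) * ε ^ 2)
    (U : Fin nJ → ℝ)
    (hU : U = fun i => d ⟨min (nJ - 1) (i.val / g * g + g - 1),
      (Nat.min_le_left _ _).trans_lt (Nat.sub_lt i.pos Nat.one_pos)⟩) :
    (kOPTF U S k : ℝ) ≤ (1 + ε) * (kOPTF d S k : ℝ) :=
  stmt_13_general ε S hε hS k nJ d hd hmono g hgval U hU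
end

section
/- Let 0 < ε ≤ 1/2, S > 0, k ≥ 1, and let D be an instance with item sizes in (0, S]. Let J be the sub-instance of items of size greater than ε·S and I the sub-instance of items of size at most ε·S. Suppose P is a k-times packing of J_k using L ≤ (1+ε)·OPT(J_k) bins. Extend P by greedily inserting the k copies of each small item of I one at a time, placing each copy in the first bin that has enough remaining capacity and does not contain another copy of the same item, and opening a new bin when no such bin exists. Then the resulting k-times packing of D_k uses at most (1 + 2ε)·OPT(D_k) + k bins. -/
/-- One step of First-Fit insertion for `k`-times bin packing: insert (a copy of)
item `i` of size `d i` into the first bin that has enough remaining capacity and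
does not already contain another copy of item `i`; open a new bin otherwise. -/
noncomputable def ffInsertF {n : ℕ} (d : Fin n → ℝ) (S : ℝ) (i : Fin n) :
    List (Finset (Fin n)) → List (Finset (Fin n))
  | [] => [{i}]
  | b :: bs =>
      if (∑ j ∈ b, d j) + d i ≤ S ∧ i ∉ b then insert i b :: bs
      else b :: ffInsertF d S i bs

/-- `OPT` of the sub-instance of `d` consisting of the items in `P`, for `k`-times
bin packing with capacity `S`: bins only contain items of `P`, each bin has total
size at most `S`, and each item of `P` lies in exactly `k` bins. -/
noncomputable def kOPTOn {n : ℕ} (d : Fin n → ℝ) (S : ℝ) (k : ℕ)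
    (P : Finset (Fin n)) : ℕ :=
  sInf {q | ∃ B : Fin q → Finset (Fin n),
    (∀ j, B j ⊆ P) ∧ (∀ j, ∑ i ∈ B j, d i ≤ S) ∧
    (∀ i ∈ P, (Finset.univ.filter fun j => i ∈ B j).card = k)}

/-! Call a bin light if its load is at most `(1 - ε) * S`. First Fit opens a new bin for a copy
of a small item `i` only when every bin without `i` is fuller than `S - d i ≥ (1 - ε) * S`, so
then every light bin holds a copy of `i`; as fewer than `k` copies of `i` have been placed, at
most `k` bins are light from the moment the packing grows beyond its initial `L` bins on. If it
never does, `L ≤ (1 + ε) OPT(J_k) ≤ (1 + ε) OPT(D_k)`. Otherwise all but `k` bins are heavy,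
and comparing with the total load `k ∑ d ≤ OPT(D_k) S` gives `#heavy (1 - ε) ≤ OPT(D_k)`, hence
`#heavy ≤ (1 + 2ε) OPT(D_k)` because `ε ≤ 1/2`. -/

open Finset

theorem List.sum_map_sum_eq_sum_countP_smul {α M : Type*} [Fintype α] [DecidableEq α]
    [AddCommMonoid M] (d : α → M) (bs : List (Finset α)) :
    (bs.map fun b => ∑ i ∈ b, d i).sum = ∑ i, bs.countP (i ∈ ·) • d i := by
  induction bs with
  | nil => simp
  | cons b bs ih =>
    simp only [List.map_cons, List.sum_cons, ih, List.countP_cons, add_smul, sum_add_distrib]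
    simp [add_comm, ite_smul, sum_ite_mem]

theorem Finset.sum_sum_eq_sum_card_smul {ι α M : Type*} [Fintype ι] [Fintype α] [DecidableEq α]
    [AddCommMonoid M] (B : ι → Finset α) (d : α → M) :
    ∑ j, ∑ i ∈ B j, d i = ∑ i, #{j | i ∈ B j} • d i := by
  rw [sum_comm' (t' := univ) (s' := fun i => {j | i ∈ B j}) (by simp)]
  simp

theorem List.countP_le_countP_of_forall₂ {α β : Type*} {R : α → β → Prop} {p : α → Bool}
    {q : β → Bool} (hpq : ∀ a b, R a b → q b → p a) {l₁ : List α} {l₂ : List β}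
    (h : List.Forall₂ R l₁ l₂) : l₂.countP q ≤ l₁.countP p := by
  induction h with
  | nil => simp
  | cons hab _ ih =>
    simp only [List.countP_cons]
    have := hpq _ _ hab
    split_ifs <;> simp_all
    omega

theorem List.countP_lt_mul_le_sum_map {α : Type*} (f : α → ℝ) (c : ℝ) {l : List α}
    (hf : ∀ a ∈ l, 0 ≤ f a) : (l.countP (c < f ·) : ℝ) * c ≤ (l.map f).sum := by
  induction l with
  | nil => simp
  | cons a l ih =>
    have ha := hf a List.mem_cons_self
    have := ih fun b hb => hf b (List.mem_cons_of_mem a hb)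
    simp only [List.countP_cons, List.map_cons, List.sum_cons]
    split_ifs with hca
    · push_cast
      linarith [of_decide_eq_true hca]
    · simpa using by linarith

section FirstFit

variable {n : ℕ} (d : Fin n → ℝ) (S : ℝ)

theorem countP_mem_ffInsertF (i j : Fin n) (bs : List (Finset (Fin n))) :
    (ffInsertF d S i bs).countP (j ∈ ·) = bs.countP (j ∈ ·) + if j = i then 1 else 0 := by
  induction bs with
  | nil => simp [ffInsertF, eq_comm]
  | cons b bs ih =>
    rw [ffInsertF]
    split_ifs with hfit hji <;> simp_all [List.countP_cons]; omega

theorem ffInsertF_cases {i : Fin n} (hi : 0 ≤ d i) (bs : List (Finset (Fin n))) :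
    List.Forall₂ (fun b b' => ∑ j ∈ b, d j ≤ ∑ j ∈ b', d j) bs (ffInsertF d S i bs) ∨
      (ffInsertF d S i bs = bs ++ [{i}] ∧ ∀ b ∈ bs, i ∉ b → S < ∑ j ∈ b, d j + d i) := by
  induction bs with
  | nil => simp [ffInsertF]
  | cons b bs ih =>
    rw [ffInsertF]
    split_ifs with hfit
    · refine .inl (.cons ?_ (List.forall₂_same.2 fun _ _ => le_rfl))
      rw [sum_insert hfit.2]
      linarith
    · rcases ih with ih | ⟨ih_eq, ih_full⟩
      · exact .inl (.cons le_rfl ih)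
      · refine .inr ⟨by rw [ih_eq, List.cons_append], ?_⟩
        intro b' hb' hib'
        rcases List.mem_cons.1 hb' with rfl | hb'
        · by_contra! hle
          exact hfit ⟨hle, hib'⟩
        · exact ih_full b' hb' hib'

noncomputable def numLight (c : ℝ) (bs : List (Finset (Fin n))) : ℕ :=
  bs.countP fun b => ∑ j ∈ b, d j ≤ c

noncomputable def ffPack (order : List (Fin n)) (bs : List (Finset (Fin n))) :
    List (Finset (Fin n)) :=
  order.foldl (fun bs i => ffInsertF d S i bs) bs

theorem ffInsertF_length_le_or_numLight_le {c : ℝ} {L k : ℕ} {i : Fin n} (hi : 0 ≤ d i)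
    (hic : d i ≤ S - c) {bs : List (Finset (Fin n))} (hcopies : bs.countP (i ∈ ·) < k)
    (h : bs.length ≤ L ∨ numLight d c bs ≤ k) :
    (ffInsertF d S i bs).length ≤ L ∨ numLight d c (ffInsertF d S i bs) ≤ k := by
  rcases ffInsertF_cases d S hi bs with hmono | ⟨hnew, hfull⟩
  · rw [← hmono.length_eq]
    refine h.imp_right fun hlight => le_trans ?_ hlight
    exact List.countP_le_countP_of_forall₂ (fun _ _ hle hb => by simp_all; linarith) hmono
  · right
    have hlight_old : numLight d c bs ≤ bs.countP (i ∈ ·) :=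
      List.countP_mono_left fun b hb hlight => by
        by_contra hib
        have := hfull b hb (by simpa using hib)
        simp only [decide_eq_true_eq] at hlight
        linarith
    rw [hnew]
    calc numLight d c (bs ++ [{i}]) ≤ numLight d c bs + 1 := by
          simp only [numLight, List.countP_append]
          exact Nat.add_le_add_left List.countP_le_length _
      _ ≤ k := by omega

theorem countP_mem_ffPack (order : List (Fin n)) (bs : List (Finset (Fin n))) (j : Fin n) :
    (ffPack d S order bs).countP (j ∈ ·) = bs.countP (j ∈ ·) + order.count j := by
  induction order generalizing bs with
  | nil => simp [ffPack]
  | cons i order ih =>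
    simp only [ffPack, List.foldl_cons] at ih ⊢
    rw [ih, countP_mem_ffInsertF, List.count_cons]
    grind

theorem ffPack_length_le_or_numLight_le {c : ℝ} {L k : ℕ} (order : List (Fin n))
    (hsmall : ∀ i ∈ order, 0 ≤ d i ∧ d i ≤ S - c) (bs : List (Finset (Fin n)))
    (hcopies : ∀ i ∈ order, bs.countP (i ∈ ·) + order.count i ≤ k)
    (h : bs.length ≤ L ∨ numLight d c bs ≤ k) :
    (ffPack d S order bs).length ≤ L ∨ numLight d c (ffPack d S order bs) ≤ k := by
  induction order generalizing bs with
  | nil => exact h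
  | cons i order ih =>
    have hi := hsmall i List.mem_cons_self
    have hi_copies := hcopies i List.mem_cons_self
    rw [List.count_cons_self] at hi_copies
    refine ih (fun j hj => hsmall j (List.mem_cons_of_mem i hj)) _ (fun j hj => ?_)
      (ffInsertF_length_le_or_numLight_le d S hi.1 hi.2 (by omega) h)
    have := hcopies j (List.mem_cons_of_mem i hj)
    rw [countP_mem_ffInsertF, List.count_cons] at *
    grind

end FirstFit

section OPT

variable {n : ℕ} (d : Fin n → ℝ) (S : ℝ) (k : ℕ)

theorem exists_kPacking_kOPTOn_univ (hdS : ∀ i, d i ≤ S) :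
    ∃ B : Fin (kOPTOn d S k univ) → Finset (Fin n),
      (∀ j, ∑ i ∈ B j, d i ≤ S) ∧ ∀ i, #{j | i ∈ B j} = k := by
  suffices hne : {q | ∃ B : Fin q → Finset (Fin n), (∀ j, B j ⊆ univ) ∧
      (∀ j, ∑ i ∈ B j, d i ≤ S) ∧ ∀ i ∈ univ, #{j | i ∈ B j} = k}.Nonempty by
    obtain ⟨B, -, hB, hcard⟩ := Nat.sInf_mem hne
    exact ⟨B, hB, fun i => hcard i (mem_univ i)⟩
  refine ⟨n * k, fun m => {(finProdFinEquiv.symm m).1}, fun _ => subset_univ _,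
    fun _ => by simpa using hdS _, fun i _ => ?_⟩
  rw [card_filter, ← finProdFinEquiv.sum_comp]
  simp only [Equiv.symm_apply_apply, mem_singleton, Fintype.sum_prod_type]
  simp [apply_ite]

theorem kOPTOn_le_kOPTOn_univ (hd0 : ∀ i, 0 ≤ d i) (hdS : ∀ i, d i ≤ S) (P : Finset (Fin n)) :
    kOPTOn d S k P ≤ kOPTOn d S k univ := by
  obtain ⟨B, hB, hcard⟩ := exists_kPacking_kOPTOn_univ d S k hdS
  refine Nat.sInf_le ⟨fun j => B j ∩ P, fun _ => inter_subset_right, fun j => ?_, fun i hi => ?_⟩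
  · exact (sum_le_sum_of_subset_of_nonneg inter_subset_left fun i _ _ => hd0 i).trans (hB j)
  · simpa [hi] using hcard i

theorem mul_sum_le_kOPTOn_univ_mul (hdS : ∀ i, d i ≤ S) :
    k * ∑ i, d i ≤ kOPTOn d S k univ * S := by
  obtain ⟨B, hB, hcard⟩ := exists_kPacking_kOPTOn_univ d S k hdS
  calc k * ∑ i, d i = ∑ j, ∑ i ∈ B j, d i := by
        simp [sum_sum_eq_sum_card_smul, hcard, mul_sum]
    _ ≤ ∑ _j : Fin (kOPTOn d S k univ), S := sum_le_sum fun j _ => hB j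
    _ = kOPTOn d S k univ * S := by simp

end OPT

theorem length_le_of_numLight_le {n : ℕ} {d : Fin n → ℝ} {S ε : ℝ} {k : ℕ} (hS : 0 < S)
    (hε : 0 ≤ ε ∧ ε ≤ 1/2) (hd0 : ∀ i, 0 ≤ d i) (hdS : ∀ i, d i ≤ S) {bs : List (Finset (Fin n))}
    (hcopies : ∀ i, bs.countP (i ∈ ·) = k) (hlight : numLight d ((1 - ε) * S) bs ≤ k) :
    (bs.length : ℝ) ≤ (1 + 2 * ε) * kOPTOn d S k univ + k := by
  set N := bs.countP fun b => (1 - ε) * S < ∑ j ∈ b, d j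
  have hsplit : bs.length = numLight d ((1 - ε) * S) bs + N := by
    rw [List.length_eq_countP_add_countP fun b => decide (∑ j ∈ b, d j ≤ (1 - ε) * S)]
    simp [numLight, N]
  have hheavy : N * ((1 - ε) * S) ≤ kOPTOn d S k univ * S :=
    calc N * ((1 - ε) * S) ≤ (bs.map fun b => ∑ j ∈ b, d j).sum :=
          List.countP_lt_mul_le_sum_map _ _ fun b _ => sum_nonneg fun i _ => hd0 i
      _ = k * ∑ i, d i := by
          simp [List.sum_map_sum_eq_sum_countP_smul, hcopies, mul_sum]
      _ ≤ kOPTOn d S k univ * S := mul_sum_le_kOPTOn_univ_mul d S k hdS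
  have hN : (N : ℝ) ≤ (1 + 2 * ε) * kOPTOn d S k univ := by
    have : (N : ℝ) * (1 - ε) ≤ kOPTOn d S k univ :=
      le_of_mul_le_mul_right (by linarith) hS
    nlinarith [mul_nonneg (mul_nonneg (Nat.cast_nonneg N) hε.1) (by linarith : (0 : ℝ) ≤ 1 - 2 * ε)]
  have : (numLight d ((1 - ε) * S) bs : ℝ) ≤ k := by exact_mod_cast hlight
  rw [hsplit, Nat.cast_add]
  linarith

theorem stmt_14_general {n : ℕ} (d : Fin n → ℝ) (S ε : ℝ) (hS : 0 < S)
    (hε : 0 < ε ∧ ε ≤ 1/2) (hd : ∀ i, 0 < d i ∧ d i ≤ S) (k : ℕ)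
    (L : ℕ) (bins0 : List (Finset (Fin n))) (order : List (Fin n))
    (hlen : bins0.length = L)
    (hL : (L : ℝ) ≤ (1 + ε) *
      (kOPTOn d S k (Finset.univ.filter fun i => ε * S < d i) : ℝ))
    (hlarge : ∀ i : Fin n, ε * S < d i →
      (bins0.countP fun b => decide (i ∈ b)) = k)
    (hsmall : ∀ i : Fin n, d i ≤ ε * S →
      (bins0.countP fun b => decide (i ∈ b)) = 0)
    (hordS : ∀ i : Fin n, d i ≤ ε * S → order.count i = k)
    (hordL : ∀ i : Fin n, ε * S < d i → order.count i = 0) :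
    ((order.foldl (fun bs i => ffInsertF d S i bs) bins0).length : ℝ) ≤
      (1 + 2*ε) * (kOPTOn d S k Finset.univ : ℝ) + k := by
  change ((ffPack d S order bins0).length : ℝ) ≤ _
  have hsmall_of_mem : ∀ i ∈ order, d i ≤ ε * S := fun i hi =>
    not_lt.1 fun h => (List.count_pos_iff.2 hi).ne' (hordL i h)
  have hcopies : ∀ i, (ffPack d S order bins0).countP (i ∈ ·) = k := by
    intro i
    rw [countP_mem_ffPack]
    rcases le_or_gt (d i) (ε * S) with h | h
    · simp [hsmall i h, hordS i h]
    · simp [hlarge i h, hordL i h]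
  rcases ffPack_length_le_or_numLight_le d S (c := (1 - ε) * S) (k := k) order
      (fun i hi => ⟨(hd i).1.le, by linarith [hsmall_of_mem i hi]⟩) bins0
      (fun i hi => by simp [hsmall i (hsmall_of_mem i hi), hordS i (hsmall_of_mem i hi)])
      (.inl hlen.le) with hpack | hlight
  · have hOPT : (kOPTOn d S k {i | ε * S < d i} : ℝ) ≤ kOPTOn d S k univ := by
      exact_mod_cast kOPTOn_le_kOPTOn_univ d S k (fun i => (hd i).1.le) (fun i => (hd i).2) _
    calc ((ffPack d S order bins0).length : ℝ) ≤ L := by exact_mod_cast hpack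
      _ ≤ (1 + ε) * kOPTOn d S k univ := hL.trans (by gcongr; linarith)
      _ ≤ (1 + 2 * ε) * kOPTOn d S k univ + k := by
        have : (0 : ℝ) ≤ kOPTOn d S k univ := Nat.cast_nonneg _
        nlinarith [hε.1, (Nat.cast_nonneg k : (0 : ℝ) ≤ k)]
  · exact length_le_of_numLight_le hS ⟨hε.1.le, hε.2⟩ (fun i => (hd i).1.le) (fun i => (hd i).2)
      hcopies hlight

/-- Let `0 < ε ≤ 1/2`, `S > 0`, `k ≥ 1`, sizes in `(0,S]`; `J` the
large items (size `> ε·S`), `I` the small items (size `≤ ε·S`).  If `P` is a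
`k`-times packing of `J_k` into `L ≤ (1+ε)·OPT(J_k)` bins, and the `k` copies of
each small item are added greedily one at a time (each copy into the first bin with
enough remaining capacity that does not contain another copy of the same item,
opening a new bin only when needed), then the resulting `k`-times packing of `D_k`
uses at most `(1+2ε)·OPT(D_k) + k` bins. -/
theorem stmt_14 {n : ℕ} (d : Fin n → ℝ) (S ε : ℝ) (hS : 0 < S)
    (hε : 0 < ε ∧ ε ≤ 1/2) (hd : ∀ i, 0 < d i ∧ d i ≤ S) (k : ℕ) (hk : 1 ≤ k)
    (L : ℕ) (bins0 : List (Finset (Fin n))) (order : List (Fin n))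
    (hlen : bins0.length = L)
    (hL : (L : ℝ) ≤ (1 + ε) *
      (kOPTOn d S k (Finset.univ.filter fun i => ε * S < d i) : ℝ))
    (hfeas : ∀ b ∈ bins0, ∑ i ∈ b, d i ≤ S)
    (hlarge : ∀ i : Fin n, ε * S < d i →
      (bins0.countP fun b => decide (i ∈ b)) = k)
    (hsmall : ∀ i : Fin n, d i ≤ ε * S →
      (bins0.countP fun b => decide (i ∈ b)) = 0)
    (hordS : ∀ i : Fin n, d i ≤ ε * S → order.count i = k)
    (hordL : ∀ i : Fin n, ε * S < d i → order.count i = 0) :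
    ((order.foldl (fun bs i => ffInsertF d S i bs) bins0).length : ℝ) ≤
      (1 + 2*ε) * (kOPTOn d S k Finset.univ : ℝ) + k :=
  stmt_14_general d S ε hS hε hd k L bins0 order hlen hL hlarge hsmall hordS hordL
end
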